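/- arXiv:2312.01685 — 2 statements merged into one kernel-verified Lean document; each statement's English description precedes it below -/
import Mathlib

section
/- Let $\Omega \subset \mathbb{R}^N$ be a bounded domain, $2 < q < 2N/(N-2)_+$, $\lambda_q = (q-1)/(q-2)$, and $J(w) = \frac{1}{2}\int_\Omega |\nabla w|^2 dx - \frac{\lambda_q}{q}\int_\Omega |w|^q dx$ for $w \in H^1_0(\Omega)$. Let $\phi \in H^1_0(\Omega)$ be a weak solution of $-\Delta\phi = \lambda_q|\phi|^{q-2}\phi$ with zero Dirichlet data, and let $\mathcal{L}_\phi = -\Delta - \lambda_q(q-1)|\phi|^{q-2} : H^1_0(\Omega) \to H^{-1}(\Omega)$. Then for $2 < q < 3$ and any $u \in H^1_0(\Omega)$: $\left| J(u) - J(\phi) - \frac{1}{2}\langle \mathcal{L}_\phi(u-\phi), u - \phi\rangle \right| \le \frac{\lambda_q(q-1)}{2} \|u - \phi\|_{L^q(\Omega)}^{q}$. -/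
/-! With `g y = |y| ^ (q - 2) * y`, testing the equation of `φ` against `u - φ` turns
`J(u) - J(φ) - ½⟨𝓛_φ(u - φ), u - φ⟩` into `-(λ_q / q) ∫ R(φ, u)`, where `R(a, c)` is the
second-order Taylor remainder of `|·| ^ q` at `a`. For `2 ≤ q ≤ 3` the map `y ↦ |y| ^ (q - 2)` is
Hölder continuous of exponent `q - 2` with constant one, hence so is `g' = (q - 1) |·| ^ (q - 2)`,
and integrating twice gives `|R(a, c)| ≤ q (q - 1) / 2 * |c - a| ^ q`. -/

open MeasureTheory

theorem abs_rpow_sub_rpow_le {p x y : ℝ} (hx : 0 ≤ x) (hy : 0 ≤ y) (hp0 : 0 ≤ p)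
    (hp1 : p ≤ 1) : |x ^ p - y ^ p| ≤ |x - y| ^ p := by
  wlog hyx : y ≤ x generalizing x y
  · rw [abs_sub_comm, abs_sub_comm x]
    exact this hy hx (le_of_not_ge hyx)
  have hmono : y ^ p ≤ x ^ p := Real.rpow_le_rpow hy hyx hp0
  have hsubadd : x ^ p ≤ y ^ p + (x - y) ^ p := by
    simpa using Real.rpow_add_le_add_rpow hy (sub_nonneg.2 hyx) hp0 hp1
  rw [abs_of_nonneg (sub_nonneg.2 hmono), abs_of_nonneg (sub_nonneg.2 hyx)]
  linarith

theorem abs_abs_rpow_sub_abs_rpow_le {p : ℝ} (hp0 : 0 ≤ p) (hp1 : p ≤ 1) (x y : ℝ) :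
    |(|x| ^ p - |y| ^ p)| ≤ |x - y| ^ p :=
  (abs_rpow_sub_rpow_le (abs_nonneg x) (abs_nonneg y) hp0 hp1).trans
    (Real.rpow_le_rpow (abs_nonneg _) (abs_abs_sub_abs_le_abs_sub x y) hp0)

theorem abs_rpow_add_two {s : ℝ} (hs : 0 ≤ s) (y : ℝ) : |y| ^ (s + 2) = |y| ^ s * y ^ 2 := by
  rw [Real.rpow_add_of_nonneg (abs_nonneg y) hs zero_le_two, Real.rpow_two, sq_abs]

theorem hasDerivAt_abs_rpow_mul_self {s : ℝ} (hs : 0 ≤ s) (x : ℝ) :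
    HasDerivAt (fun y => |y| ^ s * y) ((s + 1) * |x| ^ s) x := by
  have hcont : Continuous fun y : ℝ => |y| ^ s := continuous_abs.rpow_const fun _ => Or.inr hs
  refine hasDerivAt_of_hasDerivAt_of_ne' (f := fun y => |y| ^ s * y)
    (g := fun y => (s + 1) * |y| ^ s) (x := 0) (fun y hy => ?_)
    (hcont.mul continuous_id).continuousAt (continuous_const.mul hcont).continuousAt x
  -- `|y| ^ s * y = |y| ^ (s + 2) / y` for all `y`, a quotient differentiable away from `0`
  have hquot : (fun y : ℝ => |y| ^ (s + 2) / y) = fun y => |y| ^ s * y := by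
    funext z
    rcases eq_or_ne z 0 with rfl | hz
    · simp
    · rw [abs_rpow_add_two hs]; field_simp
  rw [← hquot]
  refine ((hasDerivAt_abs_rpow y (by linarith : 1 < s + 2)).div
    (hasDerivAt_id y) hy).congr_deriv ?_
  rw [abs_rpow_add_two hs, id, add_sub_cancel_right]
  field_simp
  ring

theorem abs_abs_rpow_mul_self_sub_linear_le {s : ℝ} (hs0 : 0 ≤ s) (hs1 : s ≤ 1) (a c : ℝ) :
    |(|c| ^ s * c - |a| ^ s * a - (s + 1) * |a| ^ s * (c - a))|
      ≤ (s + 1) * |c - a| ^ s * |c - a| := by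
  have hderiv : ∀ x ∈ Set.uIcc a c, HasDerivWithinAt
      (fun y => |y| ^ s * y - (s + 1) * |a| ^ s * y)
      ((s + 1) * (|x| ^ s - |a| ^ s)) (Set.uIcc a c) x := fun x _ => by
    refine ((hasDerivAt_abs_rpow_mul_self hs0 x).sub
      ((hasDerivAt_id x).const_mul _)).hasDerivWithinAt.congr_deriv ?_
    simp only [mul_one]
    ring
  have hbound : ∀ x ∈ Set.uIcc a c, ‖(s + 1) * (|x| ^ s - |a| ^ s)‖ ≤ (s + 1) * |c - a| ^ s :=
    fun x hx => by
    rw [Real.norm_eq_abs, abs_mul, abs_of_pos (by linarith : 0 < s + 1)]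
    gcongr
    exact (abs_abs_rpow_sub_abs_rpow_le hs0 hs1 x a).trans
      (Real.rpow_le_rpow (abs_nonneg _) (Set.abs_sub_left_of_mem_uIcc hx) hs0)
  have := (convex_uIcc a c).norm_image_sub_le_of_norm_hasDerivWithin_le hderiv hbound
    Set.left_mem_uIcc Set.right_mem_uIcc
  rw [Real.norm_eq_abs, Real.norm_eq_abs] at this
  convert this using 2
  ring

theorem abs_abs_rpow_sub_taylor_le {q : ℝ} (hq2 : 2 ≤ q) (hq3 : q ≤ 3) (a c : ℝ) :
    |(|c| ^ q - |a| ^ q - q * (|a| ^ (q - 2) * a * (c - a))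
        - q * (q - 1) / 2 * (|a| ^ (q - 2) * (c - a) ^ 2))|
      ≤ q * (q - 1) / 2 * |c - a| ^ q := by
  set b := c - a
  have hs : 0 ≤ q - 2 := by linarith
  have hq : q - 2 + 2 = q := by ring
  set R : ℝ → ℝ := fun t => |a + t * b| ^ q - |a| ^ q - q * (|a| ^ (q - 2) * a * b) * t
    - q * (q - 1) / 2 * (|a| ^ (q - 2) * b ^ 2) * t ^ 2
  -- `R' t = q * b * (g (a + t b) - g a - g' a * t b)` with `g y = |y| ^ (q - 2) * y`
  set R' : ℝ → ℝ := fun t => q * b * (|a + t * b| ^ (q - 2) * (a + t * b) - |a| ^ (q - 2) * a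
    - (q - 1) * |a| ^ (q - 2) * (a + t * b - a))
  have hR : ∀ t, HasDerivAt R (R' t) t := fun t => by
    have hline : HasDerivAt (fun t => a + t * b) b t := by
      simpa using ((hasDerivAt_id t).mul_const b).const_add a
    refine ((((hasDerivAt_abs_rpow (a + t * b) (by linarith)).comp t hline).sub_const _).sub
      ((hasDerivAt_id t).const_mul _) |>.sub ((hasDerivAt_pow 2 t).const_mul _)).congr_deriv ?_
    simp only [R']
    ring
  have hB : ∀ t, HasDerivAt (fun t => q * (q - 1) / 2 * |b| ^ q * t ^ 2)
      (q * (q - 1) * |b| ^ q * t) t := fun t => by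
    refine ((hasDerivAt_pow 2 t).const_mul _).congr_deriv ?_
    ring
  have hR'bound : ∀ t ∈ Set.Ico (0 : ℝ) 1, ‖R' t‖ ≤ q * (q - 1) * |b| ^ q * t := fun t ht => by
    have hrem := abs_abs_rpow_mul_self_sub_linear_le hs (by linarith) a (a + t * b)
    have htb : |a + t * b - a| = t * |b| := by
      rw [add_sub_cancel_left, abs_mul, abs_of_nonneg ht.1]
    rw [htb, show q - 2 + 1 = q - 1 by ring] at hrem
    have hpow : (t * |b|) ^ (q - 2) ≤ |b| ^ (q - 2) :=
      Real.rpow_le_rpow (mul_nonneg ht.1 (abs_nonneg b))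
        (mul_le_of_le_one_left (abs_nonneg b) ht.2.le) hs
    calc ‖R' t‖ = q * |b| * |(|a + t * b| ^ (q - 2) * (a + t * b) - |a| ^ (q - 2) * a
          - (q - 1) * |a| ^ (q - 2) * (a + t * b - a))| := by
          rw [Real.norm_eq_abs, abs_mul, abs_mul, abs_of_nonneg (by linarith : 0 ≤ q)]
      _ ≤ q * |b| * ((q - 1) * (t * |b|) ^ (q - 2) * (t * |b|)) := by gcongr
      _ ≤ q * |b| * ((q - 1) * |b| ^ (q - 2) * (t * |b|)) := by
          gcongr
          exacts [mul_nonneg ht.1 (abs_nonneg b), by linarith]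
      _ = q * (q - 1) * (|b| ^ (q - 2) * |b| ^ 2) * t := by ring
      _ = q * (q - 1) * (|b| ^ (q - 2) * b ^ 2) * t := by rw [sq_abs]
      _ = q * (q - 1) * |b| ^ q * t := by rw [← abs_rpow_add_two hs, hq]
  have := image_norm_le_of_norm_deriv_right_le_deriv_boundary
    (fun t _ => (hR t).continuousAt.continuousWithinAt) (fun t _ => (hR t).hasDerivWithinAt)
    (by simp [R]) hB hR'bound (Set.right_mem_Icc.2 zero_le_one)
  simpa [R, b] using this

theorem rpow_sub_mul_rpow_le_add {a b k q : ℝ} (ha : 0 ≤ a) (hb : 0 ≤ b) (hk : 0 ≤ k)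
    (hkq : k ≤ q) : a ^ (q - k) * b ^ k ≤ a ^ q + b ^ q := by
  have hmax : max a b ^ q ≤ a ^ q + b ^ q := by
    rcases max_choice a b with h | h <;> rw [h] <;>
      linarith [Real.rpow_nonneg ha q, Real.rpow_nonneg hb q]
  calc a ^ (q - k) * b ^ k ≤ max a b ^ (q - k) * max a b ^ k := by
        gcongr
        exacts [le_max_left a b, le_max_right a b]
    _ = max a b ^ q := by
        rw [← Real.rpow_add_of_nonneg (le_max_of_le_left ha) (sub_nonneg.2 hkq) hk, sub_add_cancel]
    _ ≤ a ^ q + b ^ q := hmax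

section Integral

variable {α : Type*} [MeasurableSpace α] {μ : Measure α} {q : ℝ} {f g : α → ℝ}

theorem MeasureTheory.MemLp.integrable_abs_rpow (hq : 0 < q)
    (hf : MemLp f (ENNReal.ofReal q) μ) : Integrable (fun x => |f x| ^ q) μ := by
  simpa [ENNReal.toReal_ofReal hq.le] using
    hf.integrable_norm_rpow (by simpa using hq) ENNReal.ofReal_ne_top

theorem abs_integral_abs_rpow_sub_taylor_le (hq2 : 2 ≤ q) (hq3 : q ≤ 3)
    (hf : MemLp f (ENNReal.ofReal q) μ) (hg : MemLp g (ENNReal.ofReal q) μ) :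
    |(∫ x, |g x| ^ q ∂μ) - (∫ x, |f x| ^ q ∂μ)
        - q * (∫ x, |f x| ^ (q - 2) * f x * (g x - f x) ∂μ)
        - q * (q - 1) / 2 * ∫ x, |f x| ^ (q - 2) * (g x - f x) ^ 2 ∂μ|
      ≤ q * (q - 1) / 2 * ∫ x, |g x - f x| ^ q ∂μ := by
  have hq : 0 < q := by linarith
  have hF := hf.integrable_abs_rpow hq
  have hG := hg.integrable_abs_rpow hq
  have hD : Integrable (fun x => |g x - f x| ^ q) μ := (hg.sub hf).integrable_abs_rpow hq
  have hcont : Continuous fun y : ℝ => |y| ^ (q - 2) :=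
    continuous_abs.rpow_const fun _ => Or.inr (by linarith)
  have hfirst : Integrable (fun x => |f x| ^ (q - 2) * f x * (g x - f x)) μ := by
    refine (hF.add hD).mono' (((hcont.comp_aestronglyMeasurable hf.1).mul hf.1).mul
      (hg.1.sub hf.1)) (.of_forall fun x => ?_)
    have hf1 : |f x| ^ (q - 2) * |f x| = |f x| ^ (q - 1) := by
      rw [← Real.rpow_add_one' (abs_nonneg _) (by linarith)]
      ring_nf
    have := rpow_sub_mul_rpow_le_add (abs_nonneg (f x)) (abs_nonneg (g x - f x)) zero_le_one
      (by linarith : (1 : ℝ) ≤ q)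
    rw [Real.rpow_one] at this
    rwa [Real.norm_eq_abs, abs_mul, abs_mul, Real.abs_rpow_of_nonneg (abs_nonneg _), abs_abs, hf1]
  have hsecond : Integrable (fun x => |f x| ^ (q - 2) * (g x - f x) ^ 2) μ := by
    refine (hF.add hD).mono' ((hcont.comp_aestronglyMeasurable hf.1).mul
      ((hg.1.sub hf.1).pow 2)) (.of_forall fun x => ?_)
    have := rpow_sub_mul_rpow_le_add (abs_nonneg (f x)) (abs_nonneg (g x - f x)) zero_le_two hq2
    rw [Real.rpow_two, sq_abs] at this
    rwa [Real.norm_eq_abs, abs_mul, Real.abs_rpow_of_nonneg (abs_nonneg _), abs_abs, abs_sq]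
  have hsplit : ∫ x, (|g x| ^ q - |f x| ^ q - q * (|f x| ^ (q - 2) * f x * (g x - f x))
        - q * (q - 1) / 2 * (|f x| ^ (q - 2) * (g x - f x) ^ 2)) ∂μ
      = (∫ x, |g x| ^ q ∂μ) - (∫ x, |f x| ^ q ∂μ)
        - q * (∫ x, |f x| ^ (q - 2) * f x * (g x - f x) ∂μ)
        - q * (q - 1) / 2 * ∫ x, |f x| ^ (q - 2) * (g x - f x) ^ 2 ∂μ := by
    rw [integral_sub, integral_sub, integral_sub hG hF, integral_const_mul, integral_const_mul]
    exacts [hG.sub hF, hfirst.const_mul q, (hG.sub hF).sub (hfirst.const_mul q),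
      hsecond.const_mul _]
  rw [← hsplit, ← integral_const_mul, ← Real.norm_eq_abs]
  refine norm_integral_le_of_norm_le (hD.const_mul _) (.of_forall fun x => ?_)
  exact abs_abs_rpow_sub_taylor_le hq2 hq3 (f x) (g x)

end Integral

open scoped RealInnerProductSpace

theorem stmt_12_general {N : ℕ} (Ω : Set (EuclideanSpace ℝ (Fin N)))
    (q : ℝ) (hq1 : 2 < q) (hq3 : q < 3)
    {H : Type*} [NormedAddCommGroup H] [InnerProductSpace ℝ H]
    (T : H →ₗ[ℝ] (EuclideanSpace ℝ (Fin N) → ℝ))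
    (hTLq : ∀ u : H, MemLp (T u) (ENNReal.ofReal q) (volume.restrict Ω))
    (φ u : H)
    (hφ : ∀ z : H, ⟪φ, z⟫ =
      (q - 1) / (q - 2) * ∫ x in Ω, |T φ x| ^ (q - 2) * T φ x * T z x) :
    |(1 / 2 * ‖u‖ ^ 2 - (q - 1) / (q - 2) / q * ∫ x in Ω, |T u x| ^ q)
        - (1 / 2 * ‖φ‖ ^ 2 - (q - 1) / (q - 2) / q * ∫ x in Ω, |T φ x| ^ q)
        - 1 / 2 * (‖u - φ‖ ^ 2
            - (q - 1) / (q - 2) * (q - 1)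
              * ∫ x in Ω, |T φ x| ^ (q - 2) * (T (u - φ) x) ^ 2)|
      ≤ (q - 1) / (q - 2) * (q - 1) / 2 * ∫ x in Ω, |T u x - T φ x| ^ q := by
  have hq : 0 < q := by linarith
  have hcoef : 0 < (q - 1) / (q - 2) / q := by apply div_pos (div_pos _ _) hq <;> linarith
  have hnorm : ‖u‖ ^ 2 = ‖φ‖ ^ 2 + 2 * ⟪φ, u - φ⟫ + ‖u - φ‖ ^ 2 := by
    simpa using norm_add_sq_real φ (u - φ)
  have htaylor := abs_integral_abs_rpow_sub_taylor_le hq1.le hq3.le (hTLq φ) (hTLq u)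
  rw [hnorm, hφ (u - φ)]
  simp only [map_sub, Pi.sub_apply]
  calc _ = |-((q - 1) / (q - 2) / q) * ((∫ x in Ω, |T u x| ^ q) - (∫ x in Ω, |T φ x| ^ q)
          - q * (∫ x in Ω, |T φ x| ^ (q - 2) * T φ x * (T u x - T φ x))
          - q * (q - 1) / 2 * ∫ x in Ω, |T φ x| ^ (q - 2) * (T u x - T φ x) ^ 2)| := by
        congr 1
        field_simp
        ring
    _ ≤ (q - 1) / (q - 2) / q * (q * (q - 1) / 2 * ∫ x in Ω, |T u x - T φ x| ^ q) := by
        rw [abs_mul, abs_neg, abs_of_pos hcoef]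
        exact mul_le_mul_of_nonneg_left htaylor hcoef.le
    _ = _ := by
        field_simp

/-- **Taylor expansion of the energy.** With `Ω`, `2 < q < 3 (< 2*)`,
`λ_q = (q-1)/(q-2)`, `H ≅ H¹₀(Ω)` (realized by `T`, so that `‖w‖² = ∫ |∇w|²`), the
energy `J(w) = ½‖w‖² - (λ_q/q) ∫ |w|^q` and a weak solution `φ` of
`-Δ φ = λ_q |φ|^(q-2) φ` (hypothesis `hφ`), one has for every `u ∈ H¹₀(Ω)`:
`|J(u) - J(φ) - ½⟨𝓛_φ(u-φ), u-φ⟩| ≤ (λ_q (q-1)/2) ‖u-φ‖_{L^q}^q`, where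
`⟨𝓛_φ z, z⟩ = ‖z‖² - λ_q (q-1) ∫ |φ|^(q-2) z²`. -/
theorem stmt_12 {N : ℕ} (Ω : Set (EuclideanSpace ℝ (Fin N)))
    (hΩopen : IsOpen Ω) (hΩconn : IsConnected Ω) (hΩbdd : Bornology.IsBounded Ω)
    (q : ℝ) (hq1 : 2 < q) (hq3 : q < 3) (hq2 : (N : ℝ) ≤ 2 ∨ q < 2 * N / (N - 2))
    {H : Type*} [NormedAddCommGroup H] [InnerProductSpace ℝ H] [CompleteSpace H]
    (T : H →ₗ[ℝ] (EuclideanSpace ℝ (Fin N) → ℝ))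
    (hTmeas : ∀ u : H, Measurable (T u))
    (hTLq : ∀ u : H, MemLp (T u) (ENNReal.ofReal q) (volume.restrict Ω))
    (φ u : H)
    (hφ : ∀ z : H, ⟪φ, z⟫ =
      (q - 1) / (q - 2) * ∫ x in Ω, |T φ x| ^ (q - 2) * T φ x * T z x) :
    |(1 / 2 * ‖u‖ ^ 2 - (q - 1) / (q - 2) / q * ∫ x in Ω, |T u x| ^ q)
        - (1 / 2 * ‖φ‖ ^ 2 - (q - 1) / (q - 2) / q * ∫ x in Ω, |T φ x| ^ q)
        - 1 / 2 * (‖u - φ‖ ^ 2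
            - (q - 1) / (q - 2) * (q - 1)
              * ∫ x in Ω, |T φ x| ^ (q - 2) * (T (u - φ) x) ^ 2)|
      ≤ (q - 1) / (q - 2) * (q - 1) / 2 * ∫ x in Ω, |T u x - T φ x| ^ q :=
  stmt_12_general Ω q hq1 hq3 T hTLq φ u hφ
end

section
/- Let $2 < q < 3$ and define the residual $\mathcal{R}(a,b) = |a|^{q-2}a - |b|^{q-2}b - (q-1)|b|^{q-2}(a-b)$ for real $a, b$. Then for a bounded domain $\Omega$ and $u, \phi \in L^q(\Omega)$: $\|\mathcal{R}(u,\phi)\|_{L^{q'}(\Omega)} \le (q-1)\|u - \phi\|_{L^q(\Omega)}^{q-1}$, where $q' = q/(q-1)$. -/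
/-!
On a segment `[b, a]` the map `t ↦ |t| ^ (q - 2) * t - (q - 1) |b| ^ (q - 2) t` has derivative
`(q - 1) (|t| ^ (q - 2) - |b| ^ (q - 2))`, which the `(q - 2)`-Hölder continuity of `s ↦ s ^ (q - 2)`
on `[0, ∞)` (a consequence of `(x + y) ^ p ≤ x ^ p + y ^ p`) bounds by `(q - 1) |a - b| ^ (q - 2)`.
The mean value inequality gives `|𝓡(a, b)| ≤ (q - 1) |a - b| ^ (q - 1)` pointwise, and
`‖|f| ^ (q - 1)‖_{q'} = ‖f‖_q ^ (q - 1)` since `q' (q - 1) = q`.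
-/

open MeasureTheory Filter Topology Asymptotics

namespace Real

lemma rpow_sub_rpow_le_abs_sub_rpow {p x y : ℝ} (hx : 0 ≤ x) (hy : 0 ≤ y) (hp0 : 0 ≤ p)
    (hp1 : p ≤ 1) : x ^ p - y ^ p ≤ |x - y| ^ p := by
  rcases le_total y x with hyx | hxy
  · have hsub : 0 ≤ x - y := sub_nonneg.2 hyx
    calc x ^ p - y ^ p = (x - y + y) ^ p - y ^ p := by rw [sub_add_cancel]
      _ ≤ (x - y) ^ p := by linarith [rpow_add_le_add_rpow hsub hy hp0 hp1]
      _ = |x - y| ^ p := by rw [abs_of_nonneg hsub]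
  · linarith [rpow_le_rpow hx hxy hp0, rpow_nonneg (abs_nonneg (x - y)) p]

lemma abs_rpow_sub_rpow_le {p x y : ℝ} (hx : 0 ≤ x) (hy : 0 ≤ y) (hp0 : 0 ≤ p)
    (hp1 : p ≤ 1) : |x ^ p - y ^ p| ≤ |x - y| ^ p :=
  abs_sub_le_iff.2 ⟨rpow_sub_rpow_le_abs_sub_rpow hx hy hp0 hp1,
    abs_sub_comm x y ▸ rpow_sub_rpow_le_abs_sub_rpow hy hx hp0 hp1⟩

lemma abs_abs_rpow_sub_abs_rpow_le {p s t : ℝ} (hp0 : 0 ≤ p) (hp1 : p ≤ 1) :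
    |(|s| ^ p - |t| ^ p)| ≤ |s - t| ^ p :=
  (abs_rpow_sub_rpow_le (abs_nonneg s) (abs_nonneg t) hp0 hp1).trans <|
    rpow_le_rpow (abs_nonneg _) (abs_abs_sub_abs_le_abs_sub s t) hp0

lemma hasDerivAt_abs_rpow_mul_self_of_pos {p x : ℝ} (hx : 0 < x) :
    HasDerivAt (fun t ↦ |t| ^ p * t) ((p + 1) * |x| ^ p) x := by
  have hpow : HasDerivAt (fun t ↦ t ^ (p + 1)) ((p + 1) * |x| ^ p) x := by
    simpa [abs_of_pos hx] using hasDerivAt_rpow_const (x := x) (p := p + 1) (Or.inl hx.ne')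
  refine hpow.congr_of_eventuallyEq ?_
  filter_upwards [eventually_gt_nhds hx] with t ht
  rw [abs_of_pos ht, rpow_add_one ht.ne']

lemma hasDerivAt_abs_rpow_mul_self_zero {p : ℝ} (hp : 0 < p) :
    HasDerivAt (fun t ↦ |t| ^ p * t) ((p + 1) * |0| ^ p) 0 := by
  rw [hasDerivAt_iff_isLittleO_nhds_zero]
  have hsmall : Tendsto (fun h : ℝ ↦ |h| ^ p) (𝓝 0) (𝓝 0) := by
    simpa [zero_rpow hp.ne'] using
      (continuous_abs.rpow_const fun _ ↦ Or.inr hp.le).tendsto (0 : ℝ)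
  simpa [zero_rpow hp.ne', mul_comm] using
    (isBigO_refl (fun h : ℝ ↦ h) (𝓝 0)).mul_isLittleO ((isLittleO_one_iff ℝ).2 hsmall)

lemma hasDerivAt_abs_rpow_mul_self {p : ℝ} (hp : 0 < p) (x : ℝ) :
    HasDerivAt (fun t ↦ |t| ^ p * t) ((p + 1) * |x| ^ p) x := by
  rcases lt_trichotomy x 0 with hx | rfl | hx
  · have hodd := ((hasDerivAt_abs_rpow_mul_self_of_pos (p := p) (neg_pos.2 hx)).comp x
      (hasDerivAt_neg x)).fun_neg
    simpa [Function.comp_def, abs_neg] using hodd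
  · exact hasDerivAt_abs_rpow_mul_self_zero hp
  · exact hasDerivAt_abs_rpow_mul_self_of_pos hx

end Real

/-- `𝓡(a, b)`: the error of the linearisation of `t ↦ |t| ^ (q - 2) * t` at `b`. -/
noncomputable def rpowResidual (q a b : ℝ) : ℝ :=
  |a| ^ (q - 2) * a - |b| ^ (q - 2) * b - (q - 1) * |b| ^ (q - 2) * (a - b)

lemma abs_rpowResidual_le {q : ℝ} (hq2 : 2 < q) (hq3 : q ≤ 3) (a b : ℝ) :
    |rpowResidual q a b| ≤ (q - 1) * |a - b| ^ (q - 1) := by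
  have hp0 : 0 < q - 2 := by linarith
  have hp1 : q - 2 ≤ 1 := by linarith
  have hderiv : ∀ t ∈ Set.uIcc b a, HasDerivWithinAt
      (fun t ↦ |t| ^ (q - 2) * t - (q - 1) * |b| ^ (q - 2) * t)
      ((q - 1) * (|t| ^ (q - 2) - |b| ^ (q - 2))) (Set.uIcc b a) t := by
    intro t _
    have ht := (Real.hasDerivAt_abs_rpow_mul_self hp0 t).fun_sub
      (hasDerivAt_const_mul ((q - 1) * |b| ^ (q - 2)))
    rw [show (q - 2 + 1) * |t| ^ (q - 2) - (q - 1) * |b| ^ (q - 2)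
      = (q - 1) * (|t| ^ (q - 2) - |b| ^ (q - 2)) by ring] at ht
    exact ht.hasDerivWithinAt
  have hbound : ∀ t ∈ Set.uIcc b a,
      ‖(q - 1) * (|t| ^ (q - 2) - |b| ^ (q - 2))‖ ≤ (q - 1) * |a - b| ^ (q - 2) := by
    intro t ht
    rw [Real.norm_eq_abs, abs_mul, abs_of_pos (by linarith : (0 : ℝ) < q - 1)]
    refine mul_le_mul_of_nonneg_left ?_ (by linarith)
    exact (Real.abs_abs_rpow_sub_abs_rpow_le hp0.le hp1).trans <|
      Real.rpow_le_rpow (abs_nonneg _) (Set.abs_sub_left_of_mem_uIcc ht) hp0.le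
  have hmvt := (convex_uIcc b a).norm_image_sub_le_of_norm_hasDerivWithin_le hderiv hbound
    Set.left_mem_uIcc Set.right_mem_uIcc
  calc |rpowResidual q a b|
      = ‖(|a| ^ (q - 2) * a - (q - 1) * |b| ^ (q - 2) * a)
          - (|b| ^ (q - 2) * b - (q - 1) * |b| ^ (q - 2) * b)‖ := by
        rw [rpowResidual, Real.norm_eq_abs]; ring_nf
    _ ≤ (q - 1) * |a - b| ^ (q - 2) * |a - b| := hmvt
    _ = (q - 1) * |a - b| ^ (q - 1) := by
        rw [mul_assoc, ← Real.rpow_add_one' (abs_nonneg _) (by linarith)]; ring_nf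

theorem eLpNorm_rpowResidual_le {α : Type*} [MeasurableSpace α] (μ : Measure α)
    {q : ℝ} (hq2 : 2 < q) (hq3 : q ≤ 3) (f g : α → ℝ) :
    eLpNorm (fun x ↦ rpowResidual q (f x) (g x)) (ENNReal.ofReal (q / (q - 1))) μ
      ≤ ENNReal.ofReal (q - 1) * eLpNorm (f - g) (ENNReal.ofReal q) μ ^ (q - 1) := by
  have hq1 : 0 < q - 1 := by linarith
  have hexponent : ENNReal.ofReal (q / (q - 1)) * ENNReal.ofReal (q - 1) = ENNReal.ofReal q := by
    rw [← ENNReal.ofReal_mul (by positivity), div_mul_cancel₀ q hq1.ne']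
  calc eLpNorm (fun x ↦ rpowResidual q (f x) (g x)) (ENNReal.ofReal (q / (q - 1))) μ
      ≤ eLpNorm ((q - 1) • fun x ↦ ‖(f - g) x‖ ^ (q - 1)) (ENNReal.ofReal (q / (q - 1))) μ := by
        refine eLpNorm_mono fun x ↦ ?_
        simpa [abs_of_pos hq1, abs_of_nonneg (Real.rpow_nonneg (abs_nonneg _) _)]
          using abs_rpowResidual_le hq2 hq3 (f x) (g x)
    _ = ENNReal.ofReal (q - 1) * eLpNorm (f - g) (ENNReal.ofReal q) μ ^ (q - 1) := by
        rw [eLpNorm_const_smul, eLpNorm_norm_rpow _ hq1, hexponent, Real.enorm_of_nonneg hq1.le]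

theorem stmt_14_general {N : ℕ} (Ω : Set (EuclideanSpace ℝ (Fin N)))
    (q : ℝ) (hq1 : 2 < q) (hq2 : q < 3)
    (u φ : EuclideanSpace ℝ (Fin N) → ℝ) :
    eLpNorm
        (fun x => |u x| ^ (q - 2) * u x - |φ x| ^ (q - 2) * φ x
          - (q - 1) * |φ x| ^ (q - 2) * (u x - φ x))
        (ENNReal.ofReal (q / (q - 1))) (volume.restrict Ω)
      ≤ ENNReal.ofReal (q - 1)
        * (eLpNorm (u - φ) (ENNReal.ofReal q) (volume.restrict Ω)) ^ (q - 1) :=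
  eLpNorm_rpowResidual_le _ hq1 hq2.le u φ

/-- For `2 < q < 3`, a bounded domain `Ω` and `u, φ ∈ L^q(Ω)`, the
residual `𝓡(a,b) = |a|^(q-2) a - |b|^(q-2) b - (q-1) |b|^(q-2) (a-b)` satisfies
`‖𝓡(u,φ)‖_{L^{q'}(Ω)} ≤ (q-1) ‖u - φ‖_{L^q(Ω)}^{q-1}`, where `q' = q/(q-1)`. -/
theorem stmt_14 {N : ℕ} (Ω : Set (EuclideanSpace ℝ (Fin N)))
    (hΩopen : IsOpen Ω) (hΩconn : IsConnected Ω) (hΩbdd : Bornology.IsBounded Ω)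
    (q : ℝ) (hq1 : 2 < q) (hq2 : q < 3)
    (u φ : EuclideanSpace ℝ (Fin N) → ℝ)
    (hu : MemLp u (ENNReal.ofReal q) (volume.restrict Ω))
    (hφ : MemLp φ (ENNReal.ofReal q) (volume.restrict Ω)) :
    eLpNorm
        (fun x => |u x| ^ (q - 2) * u x - |φ x| ^ (q - 2) * φ x
          - (q - 1) * |φ x| ^ (q - 2) * (u x - φ x))
        (ENNReal.ofReal (q / (q - 1))) (volume.restrict Ω)
      ≤ ENNReal.ofReal (q - 1)
        * (eLpNorm (u - φ) (ENNReal.ofReal q) (volume.restrict Ω)) ^ (q - 1) :=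
  stmt_14_general Ω q hq1 hq2 u φ
end
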